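/- arXiv:2509.18977 — 6 statements merged into one kernel-verified Lean document; each statement's English description precedes it below -/
import Mathlib

section
/- For any two Hermitian n×n complex matrices A and B with eigenvalues λ₁ ≥ λ₂ ≥ ... ≥ λₙ and μ₁ ≥ μ₂ ≥ ... ≥ μₙ (listed with multiplicity in decreasing order), the trace of AB is a real number satisfying ∑_{j=1}^n λⱼ μ_{n+1-j} ≤ trace(AB) ≤ ∑_{j=1}^n λⱼ μⱼ. -/
/-!
Diagonalising `A = U diag(λ) U*` and `B = V diag(μ) V*` gives `tr(AB) = ∑ᵢⱼ λᵢ μⱼ |Wᵢⱼ|²` with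
`W = U* V` unitary, so the matrix `S = (|Wᵢⱼ|²)` is doubly stochastic. By Birkhoff's theorem `S` is
a convex combination of permutation matrices, hence `λ ⬝ S μ` is a convex combination of the sums
`∑ᵢ λᵢ μ_{σ i}`, and the rearrangement inequality bounds each of these between
`∑ⱼ λⱼ μ_{n+1-j}` and `∑ⱼ λⱼ μⱼ`.
-/

open Matrix Finset

namespace Matrix

variable {n : Type*} [Fintype n]

theorem isLinearMap_dotProduct_mulVec {R : Type*} [CommSemiring R] (a b : n → R) :
    IsLinearMap R fun S : Matrix n n R => a ⬝ᵥ S *ᵥ b :=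
  ⟨fun S T => by simp only [add_mulVec, dotProduct_add],
    fun c S => by simp only [smul_mulVec, dotProduct_smul]⟩

variable [DecidableEq n]

section RCLike

variable {𝕜 : Type*} [RCLike 𝕜]

theorem map_norm_sq_mem_doublyStochastic {U : Matrix n n 𝕜} (hU : U ∈ unitaryGroup n 𝕜) :
    U.map (‖·‖ ^ 2) ∈ doublyStochastic ℝ n := by
  have hrow (i : n) : ∑ j, ‖U i j‖ ^ 2 = 1 := by
    have := congr_fun₂ (mem_unitaryGroup_iff.mp hU) i i
    simp only [mul_apply, star_apply, RCLike.star_def, RCLike.mul_conj, one_apply_eq] at this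
    exact_mod_cast this
  have hcol (j : n) : ∑ i, ‖U i j‖ ^ 2 = 1 := by
    have := congr_fun₂ (mem_unitaryGroup_iff'.mp hU) j j
    simp only [mul_apply, star_apply, RCLike.star_def, RCLike.conj_mul, one_apply_eq] at this
    exact_mod_cast this
  exact mem_doublyStochastic_iff_sum.mpr ⟨fun _ _ => sq_nonneg _, hrow, hcol⟩

theorem trace_diagonal_mul_mul_diagonal_mul_star (a b : n → ℝ) (W : Matrix n n 𝕜) :
    (diagonal (RCLike.ofReal ∘ a) * W * diagonal (RCLike.ofReal ∘ b) * star W).trace =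
      ((a ⬝ᵥ W.map (‖·‖ ^ 2) *ᵥ b : ℝ) : 𝕜) := by
  simp only [trace, diag_apply, mul_apply (M := _ * diagonal _), mul_diagonal, diagonal_mul,
    star_apply, RCLike.star_def, dotProduct, mulVec, map_apply, Finset.mul_sum]
  push_cast
  refine Finset.sum_congr rfl fun i _ => Finset.sum_congr rfl fun j _ => ?_
  rw [← RCLike.mul_conj]
  simp only [Function.comp_apply]
  ring

theorem IsHermitian.trace_mul_eq {A B : Matrix n n 𝕜} (hA : A.IsHermitian) (hB : B.IsHermitian) :
    (A * B).trace = ((hA.eigenvalues ⬝ᵥ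
      ((star hA.eigenvectorUnitary * hB.eigenvectorUnitary : unitaryGroup n 𝕜) :
        Matrix n n 𝕜).map (‖·‖ ^ 2) *ᵥ hB.eigenvalues : ℝ) : 𝕜) := by
  rw [← trace_diagonal_mul_mul_diagonal_mul_star]
  conv_lhs => rw [hA.spectral_theorem, hB.spectral_theorem]
  simp only [Unitary.conjStarAlgAut_apply, Submonoid.coe_mul, Unitary.coe_star, star_mul,
    star_star, Matrix.mul_assoc]
  rw [trace_mul_comm]
  simp only [Matrix.mul_assoc]

end RCLike

section DoublyStochastic

variable {R : Type*} [Field R] [LinearOrder R] [IsStrictOrderedRing R]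

theorem dotProduct_mulVec_le_of_mem_doublyStochastic {S : Matrix n n R}
    (hS : S ∈ doublyStochastic R n) {a b : n → R} {c : R}
    (h : ∀ σ : Equiv.Perm n, ∑ i, a i * b (σ i) ≤ c) : a ⬝ᵥ S *ᵥ b ≤ c := by
  rw [← SetLike.mem_coe, doublyStochastic_eq_convexHull_permMatrix] at hS
  refine convexHull_min ?_ (convex_halfSpace_le (isLinearMap_dotProduct_mulVec a b) c) hS
  rintro _ ⟨σ, rfl⟩
  simpa [permMatrix_mulVec, dotProduct] using h σ

theorem le_dotProduct_mulVec_of_mem_doublyStochastic {S : Matrix n n R}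
    (hS : S ∈ doublyStochastic R n) {a b : n → R} {c : R}
    (h : ∀ σ : Equiv.Perm n, c ≤ ∑ i, a i * b (σ i)) : c ≤ a ⬝ᵥ S *ᵥ b := by
  rw [← SetLike.mem_coe, doublyStochastic_eq_convexHull_permMatrix] at hS
  refine convexHull_min ?_ (convex_halfSpace_ge (isLinearMap_dotProduct_mulVec a b) c) hS
  rintro _ ⟨σ, rfl⟩
  simpa [permMatrix_mulVec, dotProduct] using h σ

end DoublyStochastic

end Matrix

theorem Antitone.sum_mul_rev_le_sum_mul_comp_perm {R : Type*} [Ring R] [LinearOrder R]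
    [IsStrictOrderedRing R] {n : ℕ} {f g : Fin n → R} (hf : Antitone f) (hg : Antitone g)
    (σ : Equiv.Perm (Fin n)) : ∑ i, f i * g i.rev ≤ ∑ i, f i * g (σ i) := by
  simpa using (hf.antivary (hg.comp Fin.rev_anti)).sum_mul_le_sum_mul_comp_perm
    (σ := σ.trans Fin.revPerm)

/-- Von Neumann's trace inequality for Hermitian matrices. -/
theorem vonNeumann_trace_inequality {n : ℕ} (A B : Matrix (Fin n) (Fin n) ℂ)
    (hA : A.IsHermitian) (hB : B.IsHermitian)
    (lam mu : Fin n → ℝ) (hlam : Antitone lam) (hmu : Antitone mu)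
    (hlamEig : ∃ e : Equiv.Perm (Fin n), lam = hA.eigenvalues ∘ e)
    (hmuEig : ∃ e : Equiv.Perm (Fin n), mu = hB.eigenvalues ∘ e) :
    (A * B).trace.im = 0 ∧
    ∑ j, lam j * mu j.rev ≤ (A * B).trace.re ∧
    (A * B).trace.re ≤ ∑ j, lam j * mu j := by
  obtain ⟨e, rfl⟩ := hlamEig
  obtain ⟨f, rfl⟩ := hmuEig
  set W := star hA.eigenvectorUnitary * hB.eigenvectorUnitary
  set S := ((W : Matrix (Fin n) (Fin n) ℂ).map (‖·‖ ^ 2)).submatrix e f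
  have hS : S ∈ doublyStochastic ℝ (Fin n) :=
    reindex_mem_doublyStochastic (e₁ := e.symm) (e₂ := f.symm)
      (map_norm_sq_mem_doublyStochastic W.2)
  have htrace : (A * B).trace = ((hA.eigenvalues ∘ e) ⬝ᵥ S *ᵥ (hB.eigenvalues ∘ f) : ℝ) := by
    rw [hA.trace_mul_eq hB, submatrix_mulVec_equiv, Function.comp_assoc, f.self_comp_symm,
      Function.comp_id, comp_equiv_dotProduct_comp_equiv]
    rfl
  rw [htrace, Complex.ofReal_re, Complex.ofReal_im]
  exact ⟨rfl,
    le_dotProduct_mulVec_of_mem_doublyStochastic hS (hlam.sum_mul_rev_le_sum_mul_comp_perm hmu),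
    dotProduct_mulVec_le_of_mem_doublyStochastic hS fun _ =>
      (hlam.monovary hmu).sum_mul_comp_perm_le_sum_mul⟩
end

section
/- For an n×n real matrix M with entries M_{jk} = sin(π|j−k|/n)/sin(π/n) (indices j,k ∈ {0,...,n−1}, n ≥ 3), the vector φₖ with components (φₖ)ⱼ = e^{2πijk/n} is an eigenvector of M with eigenvalue −1/(cos(π/n) − cos(2πk/n)) for every k ∈ {1,...,n−1}. -/
/-!
Since `sin (π (n - r) / n) = sin (π r / n)`, the entry `M j k` depends only on `j - k` modulo `n`,
so `M` is circulant and every Fourier vector `j ↦ ζ ^ j` with `ζ ^ n = 1` is an eigenvector, with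
eigenvalue `∑ r, sin (π r / n) ζ ^ r / sin (π / n)`. Writing `2 i sin (π r / n) = α ^ r - α⁻¹ ^ r`
with `α = exp (π i / n)`, this sum splits into two geometric series in `ζ α` and `ζ α⁻¹`; as
`α ^ n = -1`, both have numerator `-2`, and their difference simplifies to
`sin (π / n) / (cos θ - cos (π / n))` for `ζ = exp (θ i)`.
-/

open Finset Matrix
open scoped Real

theorem pow_val_add_of_pow_eq_one {M : Type*} [Monoid M] {n : ℕ} {ζ : M} (hζ : ζ ^ n = 1)
    (a b : Fin n) : ζ ^ (a + b : Fin n).val = ζ ^ a.val * ζ ^ b.val := by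
  rw [Fin.val_add, ← pow_eq_pow_mod _ hζ, pow_add]

theorem Matrix.circulant_mulVec_pow_val {R : Type*} [CommSemiring R] {n : ℕ} [NeZero n]
    (v : Fin n → R) {ζ : R} (hζ : ζ ^ n = 1) :
    circulant v *ᵥ (fun j : Fin n => ζ ^ j.val) =
      (∑ r, v (-r) * ζ ^ r.val) • fun j : Fin n => ζ ^ j.val := by
  ext j
  simp only [mulVec, dotProduct, circulant_apply, Pi.smul_apply, smul_eq_mul, sum_mul]
  refine Fintype.sum_equiv (Equiv.subRight j) _ _ fun m => ?_
  rw [Equiv.subRight_apply, neg_sub, mul_assoc, ← pow_val_add_of_pow_eq_one hζ, sub_add_cancel]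

/-- Chord length between points `r` steps apart among `n` equally spaced points on a circle with
unit nearest-neighbour distance. -/
noncomputable def uniformCircleDist (n : ℕ) (r : Fin n) : ℝ :=
  Real.sin (π * r.val / n) / Real.sin (π / n)

theorem uniformCircleDist_sub {n : ℕ} (j m : Fin n) :
    uniformCircleDist n (j - m) = Real.sin (π * |(j : ℝ) - m| / n) / Real.sin (π / n) := by
  rw [uniformCircleDist]
  congr 1
  rcases le_or_gt m j with h | h
  · rw [Fin.coe_sub_iff_le.mpr h, Nat.cast_sub (Fin.le_iff_val_le_val.mp h),
      abs_of_nonneg (sub_nonneg.mpr (by exact_mod_cast h))]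
  · have hn : (n : ℝ) ≠ 0 := by have := j.pos; positivity
    rw [Fin.coe_sub_iff_lt.mpr h, Nat.cast_sub (by omega),
      abs_of_neg (sub_neg.mpr (by exact_mod_cast h)), ← Real.sin_pi_sub]
    congr 1
    field_simp
    push_cast
    ring

theorem uniformCircleDist_neg {n : ℕ} [NeZero n] (r : Fin n) :
    uniformCircleDist n (-r) = uniformCircleDist n r := by
  rw [← zero_sub, uniformCircleDist_sub, uniformCircleDist]
  simp

open Complex in
theorem Complex.sum_sin_pi_mul_div_mul_pow {n : ℕ} (hn : n ≠ 0) {ζ : ℂ} (hζ : ζ ^ n = 1) :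
    (∑ r ∈ range n, sin (π * r / n) * ζ ^ r) * (ζ + ζ⁻¹ - 2 * cos (π / n)) =
      2 * sin (π / n) := by
  have hζ0 : ζ ≠ 0 := by rintro rfl; simp [zero_pow hn] at hζ
  set α := exp (π / n * I)
  set β := exp (-(π / n) * I)
  have hαβ : α * β = 1 := by rw [← exp_add]; simp
  have hαn : α ^ n = -1 := by
    rw [← exp_nat_mul, show (n : ℂ) * (π / n * I) = π * I by field_simp, exp_pi_mul_I]
  have hβn : β ^ n = -1 := by
    rw [← exp_nat_mul, show (n : ℂ) * (-(π / n) * I) = -π * I by field_simp,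
      neg_mul, exp_neg, exp_pi_mul_I]
    norm_num
  have hsin : ∀ r : ℕ, 2 * sin (π * r / n) * I = α ^ r - β ^ r := by
    intro r
    rw [two_sin, ← exp_nat_mul, ← exp_nat_mul, mul_assoc, I_mul_I]
    ring_nf
  have hsin_one : 2 * sin (π / n) * I = α - β := by simpa using hsin 1
  set A := ∑ r ∈ range n, (ζ * α) ^ r
  set B := ∑ r ∈ range n, (ζ * β) ^ r
  have hsum : (∑ r ∈ range n, sin (π * r / n) * ζ ^ r) * (2 * I) = A - B := by
    rw [sum_mul, ← sum_sub_distrib]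
    refine sum_congr rfl fun r _ => ?_
    rw [mul_pow, mul_pow]
    linear_combination ζ ^ r * hsin r
  have hA : A * (ζ * α - 1) = -1 - 1 := by rw [geom_sum_mul, mul_pow, hζ, hαn, one_mul]
  have hB : B * (ζ * β - 1) = -1 - 1 := by rw [geom_sum_mul, mul_pow, hζ, hβn, one_mul]
  refine mul_left_cancel₀ (mul_ne_zero hζ0 (mul_ne_zero two_ne_zero I_ne_zero)) ?_
  rw [two_cos]
  linear_combination ζ * (ζ + ζ⁻¹ - (α + β)) * hsum + (A - B) * mul_inv_cancel₀ hζ0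
    - (A - B) * ζ ^ 2 * hαβ + (ζ * β - 1) * hA - (ζ * α - 1) * hB - 2 * ζ * hsin_one

theorem sum_uniformCircleDist_mul_exp_pow {n : ℕ} (hn : 2 ≤ n) {θ : ℝ}
    (hθ : Complex.exp (θ * Complex.I) ^ n = 1) :
    ∑ r : Fin n, (uniformCircleDist n r : ℂ) * Complex.exp (θ * Complex.I) ^ r.val =
      ((-1 / (Real.cos (π / n) - Real.cos θ) : ℝ) : ℂ) := by
  set ζ := Complex.exp (θ * Complex.I)
  set S := ∑ r ∈ range n, Complex.sin (π * r / n) * ζ ^ r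
  have key : S * (2 * Complex.cos θ - 2 * Complex.cos (π / n)) = 2 * Complex.sin (π / n) := by
    rw [Complex.two_cos, neg_mul, Complex.exp_neg]
    exact Complex.sum_sin_pi_mul_div_mul_pow (by omega) hθ
  have hsin : Complex.sin (π / n) ≠ 0 := by
    have : Real.sin (π / n) ≠ 0 := (Real.sin_pos_of_pos_of_lt_pi (by positivity)
      (div_lt_self Real.pi_pos (by exact_mod_cast (by omega : 1 < n)))).ne'
    exact_mod_cast this
  have hcos : Complex.cos (π / n) - Complex.cos θ ≠ 0 := by
    intro h
    apply hsin
    linear_combination -S * h - key / 2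
  have hS : ∑ r : Fin n, (uniformCircleDist n r : ℂ) * ζ ^ r.val = S / Complex.sin (π / n) := by
    rw [sum_div, ← Fin.sum_univ_eq_sum_range (fun r => Complex.sin (π * r / n) * ζ ^ r / _)]
    refine sum_congr rfl fun r _ => ?_
    simp only [uniformCircleDist]
    push_cast
    ring
  rw [hS]
  push_cast
  rw [div_eq_div_iff hsin hcos]
  linear_combination -key / 2

theorem uniform_circle_eigenvector_general {n : ℕ} (hn : 3 ≤ n)
    (M : Matrix (Fin n) (Fin n) ℝ)
    (hM : ∀ j k : Fin n,
      M j k = Real.sin (Real.pi * |(j.val : ℝ) - (k.val : ℝ)| / n) / Real.sin (Real.pi / n))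
    (k : Fin n)
    (φ : Fin n → ℂ)
    (hφ : ∀ j : Fin n,
      φ j = Complex.exp (2 * Real.pi * Complex.I * j.val * k.val / n)) :
    (M.map (Complex.ofReal)).mulVec φ =
      (((-1) / (Real.cos (Real.pi / n) - Real.cos (2 * Real.pi * k.val / n)) : ℝ) : ℂ) • φ := by
  have : NeZero n := ⟨by omega⟩
  have hn0 : (n : ℂ) ≠ 0 := Nat.cast_ne_zero.mpr (NeZero.ne n)
  set θ : ℝ := 2 * π * k.val / n
  set ζ := Complex.exp (θ * Complex.I)
  have hζ : ζ ^ n = 1 := by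
    rw [← Complex.exp_nat_mul, show (n : ℂ) * (θ * Complex.I) = k.val * (2 * π * Complex.I) by
      push_cast [θ]; field_simp, Complex.exp_nat_mul, Complex.exp_two_pi_mul_I, one_pow]
  have hφζ : φ = fun j : Fin n => ζ ^ j.val := by
    funext j
    rw [hφ, ← Complex.exp_nat_mul]
    congr 1
    push_cast [θ]
    ring
  have hcirc : M.map Complex.ofReal = circulant fun r => (uniformCircleDist n r : ℂ) := by
    ext j m
    simp [hM, uniformCircleDist_sub]
  rw [hcirc, hφζ, circulant_mulVec_pow_val _ hζ]
  simp only [uniformCircleDist_neg]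
  rw [sum_uniformCircleDist_mul_exp_pow (by omega) hζ]

/-- Eigenvectors and eigenvalues of the distance matrix of the uniform circle TSP. -/
theorem uniform_circle_eigenvector {n : ℕ} (hn : 3 ≤ n)
    (M : Matrix (Fin n) (Fin n) ℝ)
    (hM : ∀ j k : Fin n,
      M j k = Real.sin (Real.pi * |(j.val : ℝ) - (k.val : ℝ)| / n) / Real.sin (Real.pi / n))
    (k : Fin n) (hk : 1 ≤ k.val)
    (φ : Fin n → ℂ)
    (hφ : ∀ j : Fin n,
      φ j = Complex.exp (2 * Real.pi * Complex.I * j.val * k.val / n)) :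
    (M.map (Complex.ofReal)).mulVec φ =
      (((-1) / (Real.cos (Real.pi / n) - Real.cos (2 * Real.pi * k.val / n)) : ℝ) : ℂ) • φ :=
  uniform_circle_eigenvector_general hn M hM k φ hφ
end

section
/- If an N×N real symmetric matrix E with zero diagonal is a Euclidean distance matrix (i.e., there exist vectors v₁,...,v_N in some ℝ^k with E_{ij} = ‖vᵢ − vⱼ‖²), then the matrix −P E P is positive semidefinite, where P = I − (1/N)J is the projection onto the hyperplane orthogonal to the all-ones vector. -/
/-!
Expanding `‖vᵢ - vⱼ‖² = ‖vᵢ‖² + ‖vⱼ‖² - 2⟪vᵢ, vⱼ⟫` writes `E` as `d 1ᵀ + 1 dᵀ - 2 G`,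
where `G` is the Gram matrix of the `vᵢ`. The centering matrix `P` is symmetric and kills
the all-ones vector, so `-P E P = 2 P G Pᵀ`, a congruence of the positive semidefinite `G`.
-/

open Matrix

section Centering

variable (K ι : Type*) [Field K] [Fintype ι] [DecidableEq ι]

def centeringMatrix : Matrix ι ι K :=
  1 - (Fintype.card ι : K)⁻¹ • of fun _ _ => 1

variable {K ι}

lemma centeringMatrix_isSymm : (centeringMatrix K ι).IsSymm := by
  ext i j
  simp [centeringMatrix, one_apply, eq_comm]

lemma centeringMatrix_mulVec_one [CharZero K] : centeringMatrix K ι *ᵥ 1 = 0 := by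
  cases isEmpty_or_nonempty ι
  · exact Subsingleton.elim _ _
  ext i
  simp [centeringMatrix, mulVec, dotProduct, one_apply]

lemma one_vecMul_centeringMatrix [CharZero K] : 1 ᵥ* centeringMatrix K ι = 0 := by
  rw [← mulVec_transpose, centeringMatrix_isSymm.eq, centeringMatrix_mulVec_one]

lemma centeringMatrix_mul_of_add_mul_centeringMatrix [CharZero K] (d : ι → K) :
    centeringMatrix K ι * of (fun i j => d i + d j) * centeringMatrix K ι = 0 := by
  have hd : of (fun i j => d i + d j) = vecMulVec d 1 + vecMulVec 1 d := by
    ext i j; simp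
  rw [hd, mul_add, add_mul, mul_vecMulVec, mul_vecMulVec, vecMulVec_mul, vecMulVec_mul,
    one_vecMul_centeringMatrix, centeringMatrix_mulVec_one]
  simp

end Centering

lemma of_norm_sub_sq_eq_sub_gram {ι F : Type*} [NormedAddCommGroup F] [InnerProductSpace ℝ F]
    (v : ι → F) :
    of (fun i j => ‖v i - v j‖ ^ 2) =
      of (fun i j => ‖v i‖ ^ 2 + ‖v j‖ ^ 2) - (2 : ℝ) • gram ℝ v := by
  ext i j
  simp only [norm_sub_sq_real, of_apply, Matrix.sub_apply, Matrix.smul_apply, gram_apply,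
    smul_eq_mul]
  ring

theorem posSemidef_neg_centeringMatrix_mul_mul {ι F : Type*} [Fintype ι] [DecidableEq ι]
    [NormedAddCommGroup F] [InnerProductSpace ℝ F] (v : ι → F) :
    (-(centeringMatrix ℝ ι * of (fun i j => ‖v i - v j‖ ^ 2) *
      centeringMatrix ℝ ι)).PosSemidef := by
  have hC : (centeringMatrix ℝ ι)ᴴ = centeringMatrix ℝ ι := by
    rw [conjTranspose_eq_transpose_of_trivial, centeringMatrix_isSymm.eq]
  rw [of_norm_sub_sq_eq_sub_gram, mul_sub, sub_mul,
    centeringMatrix_mul_of_add_mul_centeringMatrix, zero_sub, neg_neg, mul_smul_comm,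
    smul_mul_assoc]
  nth_rewrite 2 [← hC]
  exact ((posSemidef_gram ℝ v).mul_mul_conjTranspose_same _).smul zero_le_two

/-- One direction of the Schoenberg criterion: if `E` is a Euclidean distance matrix,
then `-PEP` is positive semidefinite. -/
theorem schoenberg_posSemidef {N k : ℕ} (E : Matrix (Fin N) (Fin N) ℝ)
    (v : Fin N → EuclideanSpace ℝ (Fin k))
    (hE : ∀ i j, E i j = ‖v i - v j‖ ^ 2)
    (P : Matrix (Fin N) (Fin N) ℝ)
    (hP : P = 1 - (N : ℝ)⁻¹ • Matrix.of (fun _ _ => (1 : ℝ))) :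
    (-(P * E * P)).PosSemidef := by
  have hEv : E = of fun i j => ‖v i - v j‖ ^ 2 := ext hE
  have hPC : P = centeringMatrix ℝ (Fin N) := by simp [hP, centeringMatrix]
  rw [hEv, hPC]
  exact posSemidef_neg_centeringMatrix_mul_mul v
end

section
/- If D is the distance matrix of a Euclidean TSP, i.e., D_{ij} = ‖vᵢ − vⱼ‖ for points v₁,...,v_N in ℝ^k, then all eigenvalues of −PDP restricted to the hyperplane orthogonal to the all-ones vector are non-negative, where P = I − (1/N)J. -/
/-!
For `t ≥ 0` one has `√t · c = ∫₀^∞ (1 - e^{-ts}) s^{-3/2} ds` with `c > 0`. Substituting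
`t = ‖vᵢ - vⱼ‖²` writes the distance matrix `D` as an integral of `J - G_s` against a positive
weight, where `J` is the all-ones matrix and `G_s = (e^{-s‖vᵢ - vⱼ‖²})` is the Gaussian kernel.
On the hyperplane `∑ xᵢ = 0` the quadratic form of `J` vanishes, and `G_s` is positive
semidefinite: it is a rank-one Hadamard factor times the entrywise exponential of a Gram matrix,
which is a convergent sum of Hadamard powers of a positive semidefinite matrix (Schur). Hence
`xᵀDx ≤ 0` there. Since `P` fixes that hyperplane, an eigenvector `x` of `-PDP` in it satisfies
`μ ‖x‖² = -xᵀDx ≥ 0`.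
-/

open MeasureTheory Set Real Matrix

namespace Matrix

variable {ι : Type*} [Fintype ι]

theorem PosSemidef.map_pow {A : Matrix ι ι ℝ} (hA : A.PosSemidef) (n : ℕ) :
    (A.map (· ^ n)).PosSemidef := by
  induction n with
  | zero =>
    simpa [vecMulVec, Matrix.map, Matrix.of] using
      posSemidef_vecMulVec_self_star (fun _ : ι => (1 : ℝ))
  | succ n ih =>
    have hsucc : A.map (· ^ (n + 1)) = A.map (· ^ n) ⊙ A := by ext; simp [pow_succ]
    exact hsucc ▸ ih.hadamard hA

theorem PosSemidef.map_exp {A : Matrix ι ι ℝ} (hA : A.PosSemidef) :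
    (A.map Real.exp).PosSemidef := by
  have hsum : HasSum (fun n : ℕ => (n.factorial : ℝ)⁻¹ • A.map (· ^ n)) (A.map Real.exp) := by
    refine Pi.hasSum.2 fun i => Pi.hasSum.2 fun j => ?_
    simpa [Real.exp_eq_exp_ℝ, div_eq_inv_mul] using NormedSpace.expSeries_div_hasSum_exp (A i j)
  refine .of_dotProduct_mulVec_nonneg (hA.isHermitian.map Real.exp fun _ => rfl) fun x => ?_
  let Q : Matrix ι ι ℝ →+ ℝ := AddMonoidHom.mk' (fun M => star x ⬝ᵥ M *ᵥ x)
    fun M N => by simp [add_mulVec, dotProduct_add]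
  have hQ : Continuous Q := by
    simp only [Q, AddMonoidHom.mk'_apply]
    fun_prop
  exact (hsum.map Q hQ).nonneg fun n =>
    ((hA.map_pow n).smul (by positivity)).dotProduct_mulVec_nonneg x

theorem dotProduct_mulVec_eq_sum (M : Matrix ι ι ℝ) (x : ι → ℝ) :
    x ⬝ᵥ M *ᵥ x = ∑ i, ∑ j, x i * M i j * x j := by
  simp [dotProduct, mulVec, Finset.mul_sum, mul_assoc]

theorem dotProduct_allOnes_sub_mulVec_of_sum_eq_zero (M : Matrix ι ι ℝ) {x : ι → ℝ}
    (hx : ∑ i, x i = 0) : x ⬝ᵥ (of (fun _ _ => (1 : ℝ)) - M) *ᵥ x = -(x ⬝ᵥ M *ᵥ x) := by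
  rw [sub_mulVec, dotProduct_sub, dotProduct_mulVec_eq_sum]
  simp [← Finset.sum_mul_sum, hx]

theorem centering_mulVec_of_sum_eq_zero [DecidableEq ι] (c : ℝ) {x : ι → ℝ} (hx : ∑ i, x i = 0) :
    (1 - c • of fun _ _ => (1 : ℝ)) *ᵥ x = x := by
  rw [sub_mulVec, one_mulVec, smul_mulVec]
  ext i
  simp [mulVec, dotProduct, hx]

theorem vecMul_centering_of_sum_eq_zero [DecidableEq ι] (c : ℝ) {x : ι → ℝ} (hx : ∑ i, x i = 0) :
    x ᵥ* (1 - c • of fun _ _ => (1 : ℝ)) = x := by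
  rw [vecMul_sub, vecMul_one, vecMul_smul]
  ext j
  simp [vecMul, dotProduct, hx]

end Matrix

theorem integrableOn_one_sub_exp_mul_rpow {t : ℝ} (ht : 0 ≤ t) :
    IntegrableOn (fun s => (1 - exp (-(t * s))) * s ^ (-(3 / 2) : ℝ)) (Ioi 0) := by
  have hmeas : AEStronglyMeasurable (fun s => (1 - exp (-(t * s))) * s ^ (-(3 / 2) : ℝ))
      (volume.restrict (Ioi 0)) :=
    ((by fun_prop : Continuous fun s => 1 - exp (-(t * s))).continuousOn.mul
      (continuousOn_id.rpow_const fun s hs => Or.inl (ne_of_gt hs))).aestronglyMeasurable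
      measurableSet_Ioi
  have hnorm : ∀ s ∈ Ioi (0 : ℝ), ‖(1 - exp (-(t * s))) * s ^ (-(3 / 2) : ℝ)‖
      = (1 - exp (-(t * s))) * s ^ (-(3 / 2) : ℝ) := fun s hs =>
    Real.norm_of_nonneg (mul_nonneg (by simpa using mul_nonneg ht (le_of_lt hs))
      (rpow_nonneg (le_of_lt hs) _))
  rw [← Ioc_union_Ioi_eq_Ioi zero_le_one]
  refine IntegrableOn.union ?_ ?_
  · have hbound : IntegrableOn (fun s : ℝ => t * s ^ (-(1 / 2) : ℝ)) (Ioc 0 1) := by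
      have := intervalIntegral.intervalIntegrable_rpow' (a := 0) (b := 1) (r := -(1 / 2))
        (by norm_num)
      rw [intervalIntegrable_iff, uIoc_of_le zero_le_one] at this
      exact this.const_mul t
    refine hbound.mono' (hmeas.mono_set Ioc_subset_Ioi_self)
      (ae_restrict_of_forall_mem measurableSet_Ioc fun s hs => ?_)
    rw [hnorm s hs.1]
    calc (1 - exp (-(t * s))) * s ^ (-(3 / 2) : ℝ) ≤ t * s * s ^ (-(3 / 2) : ℝ) :=
          mul_le_mul_of_nonneg_right (by linarith [add_one_le_exp (-(t * s))])
            (rpow_nonneg hs.1.le _)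
      _ = t * s ^ (-(1 / 2) : ℝ) := by
          rw [mul_assoc, ← rpow_one_add' hs.1.le (by norm_num)]
          norm_num
  · refine (integrableOn_Ioi_rpow_of_lt (a := -(3 / 2)) (by norm_num) one_pos).mono'
      (hmeas.mono_set (Ioi_subset_Ioi zero_le_one))
      (ae_restrict_of_forall_mem measurableSet_Ioi fun s hs => ?_)
    rw [hnorm s (mem_Ioi.2 (zero_lt_one.trans hs))]
    have := exp_pos (-(t * s))
    have := rpow_nonneg (zero_le_one.trans hs.le) (-(3 / 2) : ℝ)
    nlinarith

theorem integral_one_sub_exp_mul_rpow {t : ℝ} (ht : 0 ≤ t) :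
    ∫ s in Ioi 0, (1 - exp (-(t * s))) * s ^ (-(3 / 2) : ℝ)
      = √t * ∫ s in Ioi 0, (1 - exp (-s)) * s ^ (-(3 / 2) : ℝ) := by
  rcases ht.eq_or_lt with rfl | ht
  · simp
  have hscale : EqOn (fun s => (1 - exp (-(t * s))) * s ^ (-(3 / 2) : ℝ))
      (fun s => t ^ (3 / 2 : ℝ) * ((1 - exp (-(t * s))) * (t * s) ^ (-(3 / 2) : ℝ)))
      (Ioi 0) := by
    intro s hs
    simp only
    rw [mul_rpow ht.le (le_of_lt hs), rpow_neg ht.le]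
    field_simp
  rw [setIntegral_congr_fun measurableSet_Ioi hscale, integral_const_mul,
    integral_comp_mul_left_Ioi (fun u => (1 - exp (-u)) * u ^ (-(3 / 2) : ℝ)) 0 ht,
    mul_zero, smul_eq_mul, ← mul_assoc, sqrt_eq_rpow, ← rpow_neg_one, ← rpow_add ht]
  norm_num

theorem integral_one_sub_exp_rpow_pos :
    0 < ∫ s in Ioi 0, (1 - exp (-s)) * s ^ (-(3 / 2) : ℝ) := by
  have hint := integrableOn_one_sub_exp_mul_rpow zero_le_one
  simp only [one_mul] at hint
  have hpos : ∀ s ∈ Ioi (0 : ℝ), 0 < (1 - exp (-s)) * s ^ (-(3 / 2) : ℝ) := fun s hs =>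
    mul_pos (by simpa using hs) (rpow_pos_of_pos hs _)
  have hsupp : Function.support (fun s : ℝ => (1 - exp (-s)) * s ^ (-(3 / 2) : ℝ)) ∩ Ioi 0
      = Ioi 0 := inter_eq_right.2 fun s hs => (hpos s hs).ne'
  rw [setIntegral_pos_iff_support_of_nonneg_ae
    (ae_restrict_of_forall_mem measurableSet_Ioi fun s hs => (hpos s hs).le) hint, hsupp]
  simp

section GaussianKernel

variable {ι E : Type*} [Fintype ι] [NormedAddCommGroup E] [InnerProductSpace ℝ E]

theorem posSemidef_gaussianKernel (v : ι → E) {s : ℝ} (hs : 0 ≤ s) :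
    (of fun i j => exp (-(s * ‖v i - v j‖ ^ 2))).PosSemidef := by
  set w : ι → ℝ := fun i => exp (-(s * ‖v i‖ ^ 2))
  have hsplit : (of fun i j => exp (-(s * ‖v i - v j‖ ^ 2)))
      = vecMulVec w w ⊙ ((2 * s) • gram ℝ v).map Real.exp := by
    ext i j
    simp only [of_apply, hadamard_apply, vecMulVec_apply, map_apply, Matrix.smul_apply, gram_apply,
      smul_eq_mul, w, ← Real.exp_add, norm_sub_sq_real]
    ring_nf
  rw [hsplit]
  exact (posSemidef_vecMulVec_self_star w).hadamard
    (((posSemidef_gram ℝ v).smul (by positivity)).map_exp)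

theorem dotProduct_norm_sub_mulVec_nonpos (v : ι → E) {x : ι → ℝ} (hx : ∑ i, x i = 0) :
    x ⬝ᵥ (of fun i j => ‖v i - v j‖) *ᵥ x ≤ 0 := by
  set c := ∫ s in Ioi 0, (1 - exp (-s)) * s ^ (-(3 / 2) : ℝ)
  set K : ℝ → Matrix ι ι ℝ := fun s =>
    of fun i j => (1 - exp (-(‖v i - v j‖ ^ 2 * s))) * s ^ (-(3 / 2) : ℝ)
  have hKint : ∀ i j, IntegrableOn (fun s => K s i j) (Ioi 0) := fun i j =>
    integrableOn_one_sub_exp_mul_rpow (sq_nonneg _)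
  have hentry : ∀ i j, ‖v i - v j‖ * c = ∫ s in Ioi 0, K s i j := fun i j => by
    simp only [K, of_apply]
    rw [integral_one_sub_exp_mul_rpow (sq_nonneg _), sqrt_sq (norm_nonneg _)]
  have hK : ∀ s ∈ Ioi (0 : ℝ), x ⬝ᵥ K s *ᵥ x
      = -(s ^ (-(3 / 2) : ℝ) * (x ⬝ᵥ (of fun i j => exp (-(s * ‖v i - v j‖ ^ 2))) *ᵥ x)) := by
    intro s _
    have hKs : K s = s ^ (-(3 / 2) : ℝ) •
        (of (fun _ _ => (1 : ℝ)) - of fun i j => exp (-(s * ‖v i - v j‖ ^ 2))) := by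
      ext i j
      simp only [K, of_apply, Matrix.smul_apply, Matrix.sub_apply, smul_eq_mul, mul_comm s]
      ring
    rw [hKs, smul_mulVec, dotProduct_smul, dotProduct_allOnes_sub_mulVec_of_sum_eq_zero _ hx,
      smul_eq_mul, mul_neg]
  have hint : c * (x ⬝ᵥ (of fun i j => ‖v i - v j‖) *ᵥ x)
      = ∫ s in Ioi 0, x ⬝ᵥ K s *ᵥ x := by
    have hterm : ∀ i j, IntegrableOn (fun s => x i * K s i j * x j) (Ioi 0) := fun i j =>
      ((hKint i j).const_mul (x i)).mul_const (x j)
    simp only [dotProduct_mulVec_eq_sum, Finset.mul_sum]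
    rw [integral_finsetSum _ fun i _ => integrable_finsetSum _ fun j _ => hterm i j]
    refine Finset.sum_congr rfl fun i _ => ?_
    rw [integral_finsetSum _ fun j _ => hterm i j]
    refine Finset.sum_congr rfl fun j _ => ?_
    rw [integral_mul_const, integral_const_mul, ← hentry, of_apply]
    ring
  have hnonpos : ∫ s in Ioi 0, x ⬝ᵥ K s *ᵥ x ≤ 0 :=
    setIntegral_nonpos measurableSet_Ioi fun s hs => by
      rw [hK s hs]
      exact neg_nonpos.2 (mul_nonneg (rpow_nonneg (le_of_lt hs) _)
        (by simpa using (posSemidef_gaussianKernel v (le_of_lt hs)).dotProduct_mulVec_nonneg x))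
  exact nonpos_of_mul_nonpos_right (hint ▸ hnonpos) integral_one_sub_exp_rpow_pos

end GaussianKernel

/-- For a Euclidean TSP distance matrix `D`, all eigenvalues of `-PDP` restricted to the
hyperplane orthogonal to the all-ones vector are non-negative. -/
theorem euclidean_tsp_eigenvalues_nonneg {N k : ℕ} (D : Matrix (Fin N) (Fin N) ℝ)
    (v : Fin N → EuclideanSpace ℝ (Fin k))
    (hD : ∀ i j, D i j = ‖v i - v j‖)
    (P : Matrix (Fin N) (Fin N) ℝ)
    (hP : P = 1 - (N : ℝ)⁻¹ • Matrix.of (fun _ _ => (1 : ℝ))) :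
    ∀ (μ : ℝ) (x : Fin N → ℝ), x ≠ 0 → ∑ i, x i = 0 →
      (-(P * D * P)).mulVec x = μ • x → 0 ≤ μ := by
  intro μ x hx0 hxsum heig
  have hPx : P *ᵥ x = x := hP ▸ centering_mulVec_of_sum_eq_zero _ hxsum
  have hxP : x ᵥ* P = x := hP ▸ vecMul_centering_of_sum_eq_zero _ hxsum
  have hD' : D = of fun i j => ‖v i - v j‖ := Matrix.ext hD
  have hμ : μ * (x ⬝ᵥ x) = -(x ⬝ᵥ D *ᵥ x) := by
    calc μ * (x ⬝ᵥ x) = x ⬝ᵥ (-(P * D * P)) *ᵥ x := by rw [heig, dotProduct_smul, smul_eq_mul]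
      _ = -(x ⬝ᵥ D *ᵥ x) := by
        rw [neg_mulVec, dotProduct_neg, ← mulVec_mulVec, hPx, ← mulVec_mulVec, dotProduct_mulVec,
          hxP]
  have hxx : 0 < x ⬝ᵥ x := by simpa using dotProduct_star_self_pos_iff.2 hx0
  have hDx : x ⬝ᵥ D *ᵥ x ≤ 0 := hD' ▸ dotProduct_norm_sub_mulVec_nonpos v hxsum
  exact (mul_nonneg_iff_of_pos_right hxx).1 (hμ ▸ neg_nonneg.2 hDx)
end

section
/- Let G be the complete bipartite graph K_{n,m} with n, m ≥ 1 and let A be the adjacency matrix of its complement (block diagonal with blocks Jₙ − Iₙ and J_m − I_m). Then the matrix −PAP, where P = I − J/(n+m) on ℝ^{n+m}, has eigenvalues: 0 (on the all-ones vector), 1 with multiplicity n+m−2, and 1 − 2mn/(m+n) with multiplicity 1. -/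
/-!
Write `N = n + m`, `J` for the all-ones matrix and `s` for the `±1` sign vector of the two
cliques, so that `A = (J + s sᵀ) / 2 - 1`. The centering matrix `P` is a symmetric idempotent
killing `𝟙`, so `-PAP = 1 - J / N - t tᵀ / 2` with `t = P s`.
The vectors `𝟙` and `t` are orthogonal and `|t|² = N - (n - m)² / N = 4mn / N`, so this is the
identity minus a rank-two matrix whose nonzero eigenvalues are `1` and `2mn / N`; the
Weinstein–Aronszajn identity `χ(UV) = X ^ (N - 2) χ(VU)` reduces the computation to a diagonal
`2 × 2` matrix.
-/

open Polynomial

namespace Matrix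

section CommRing

variable {ι κ R : Type*} [Fintype ι] [DecidableEq ι] [Fintype κ] [DecidableEq κ] [CommRing R]

theorem charpoly_one_sub (M : Matrix ι ι R) : (1 - M).charpoly = (-M).charpoly.comp (X - 1) := by
  simpa [sub_eq_add_neg, add_comm] using charpoly_sub_scalar (-M) (-1)

theorem charpoly_one_sub_mul_of_le (U : Matrix ι κ R) (V : Matrix κ ι R)
    (h : Fintype.card κ ≤ Fintype.card ι) :
    (1 - U * V).charpoly =
      (X - 1) ^ (Fintype.card ι - Fintype.card κ) * (1 - V * U).charpoly := by
  rw [charpoly_one_sub, charpoly_one_sub, ← Matrix.neg_mul, charpoly_mul_comm_of_le _ _ h,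
    mul_comp, X_pow_comp, Matrix.mul_neg]

theorem charpoly_one_sub_smul_vecMulVec_add_smul_vecMulVec (a b : ι → R) (r q : R)
    (hab : a ⬝ᵥ b = 0) (hι : 2 ≤ Fintype.card ι) :
    (1 - (r • vecMulVec a a + q • vecMulVec b b)).charpoly =
      (X - 1) ^ (Fintype.card ι - 2) * (X - C (1 - r * (a ⬝ᵥ a))) *
        (X - C (1 - q * (b ⬝ᵥ b))) := by
  let U : Matrix ι (Fin 2) R := of fun i => ![a i, b i]
  let V : Matrix (Fin 2) ι R := of ![r • a, q • b]
  have hUV : r • vecMulVec a a + q • vecMulVec b b = U * V := by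
    ext i j
    simp [U, V, mul_apply, Fin.sum_univ_two, vecMulVec_apply]
    ring
  have hVU : 1 - V * U = diagonal ![1 - r * (a ⬝ᵥ a), 1 - q * (b ⬝ᵥ b)] := by
    have hab' : ∑ i, a i * b i = 0 := hab
    have hba : ∑ i, b i * a i = 0 := by simpa only [mul_comm] using hab'
    ext k l
    rw [sub_apply, mul_apply]
    fin_cases k <;> fin_cases l <;>
      simp [U, V, dotProduct, ← Finset.mul_sum, mul_assoc, hab', hba]
  rw [hUV, charpoly_one_sub_mul_of_le U V (by simpa using hι), hVU, charpoly_diagonal,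
    Fin.prod_univ_two, Fintype.card_fin, mul_assoc]
  rfl

end CommRing

section Field

variable {ι K : Type*} [Fintype ι] [DecidableEq ι] [Field K]

variable (ι K) in
def centeringMatrix : Matrix ι ι K := 1 - (Fintype.card ι : K)⁻¹ • vecMulVec 1 1

theorem centeringMatrix_transpose : (centeringMatrix ι K)ᵀ = centeringMatrix ι K := by
  rw [centeringMatrix, transpose_sub, transpose_one, transpose_smul, transpose_vecMulVec]

theorem centeringMatrix_mulVec (v : ι → K) :
    centeringMatrix ι K *ᵥ v = v - ((Fintype.card ι : K)⁻¹ * ∑ i, v i) • 1 := by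
  rw [centeringMatrix, sub_mulVec, one_mulVec, smul_mulVec, vecMulVec_mulVec, op_smul_eq_smul,
    one_dotProduct, smul_smul]

theorem centeringMatrix_mulVec_one (hι : (Fintype.card ι : K) ≠ 0) :
    centeringMatrix ι K *ᵥ 1 = 0 := by
  simp [centeringMatrix_mulVec, hι]

theorem one_dotProduct_centeringMatrix_mulVec (hι : (Fintype.card ι : K) ≠ 0) (v : ι → K) :
    1 ⬝ᵥ (centeringMatrix ι K *ᵥ v) = 0 := by
  rw [centeringMatrix_mulVec, dotProduct_sub, dotProduct_smul, one_dotProduct, one_dotProduct_one,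
    smul_eq_mul, mul_right_comm, inv_mul_cancel₀ hι, one_mul, sub_self]

theorem centeringMatrix_mulVec_dotProduct_self (hι : (Fintype.card ι : K) ≠ 0) (v : ι → K) :
    (centeringMatrix ι K *ᵥ v) ⬝ᵥ (centeringMatrix ι K *ᵥ v) =
      v ⬝ᵥ v - (Fintype.card ι : K)⁻¹ * (∑ i, v i) ^ 2 := by
  nth_rw 2 [centeringMatrix_mulVec]
  rw [dotProduct_sub, dotProduct_smul, dotProduct_comm _ 1,
    one_dotProduct_centeringMatrix_mulVec hι, smul_zero, sub_zero, centeringMatrix_mulVec,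
    sub_dotProduct, smul_dotProduct, one_dotProduct, smul_eq_mul, mul_assoc, ← sq]

theorem centeringMatrix_mul_vecMulVec_one (hι : (Fintype.card ι : K) ≠ 0) (v : ι → K) :
    centeringMatrix ι K * vecMulVec 1 v = 0 := by
  rw [mul_vecMulVec, centeringMatrix_mulVec_one hι, zero_vecMulVec]

theorem centeringMatrix_mul_self (hι : (Fintype.card ι : K) ≠ 0) :
    centeringMatrix ι K * centeringMatrix ι K = centeringMatrix ι K := by
  conv_lhs => arg 2; rw [centeringMatrix]
  rw [Matrix.mul_sub, Matrix.mul_one, Matrix.mul_smul, centeringMatrix_mul_vecMulVec_one hι,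
    smul_zero, sub_zero]

theorem neg_centeringMatrix_mul_mul_centeringMatrix (hι : (Fintype.card ι : K) ≠ 0)
    (s : ι → K) (r q : K) :
    -(centeringMatrix ι K * (r • vecMulVec 1 1 + q • vecMulVec s s - 1) *
        centeringMatrix ι K) =
      1 - ((Fintype.card ι : K)⁻¹ • vecMulVec 1 1 +
        q • vecMulVec (centeringMatrix ι K *ᵥ s) (centeringMatrix ι K *ᵥ s)) := by
  have hconj : centeringMatrix ι K * vecMulVec s s * centeringMatrix ι K =
      vecMulVec (centeringMatrix ι K *ᵥ s) (centeringMatrix ι K *ᵥ s) := by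
    rw [mul_vecMulVec, vecMulVec_mul, ← mulVec_transpose, centeringMatrix_transpose]
  rw [Matrix.mul_sub, Matrix.mul_add, Matrix.mul_smul, Matrix.mul_smul,
    centeringMatrix_mul_vecMulVec_one hι, Matrix.mul_one, Matrix.sub_mul, Matrix.add_mul,
    Matrix.smul_mul, Matrix.smul_mul, hconj,
    centeringMatrix_mul_self hι, Matrix.zero_mul, smul_zero, zero_add, centeringMatrix]
  abel

end Field

end Matrix

theorem Fin.sum_ite_lt_add {M : Type*} [AddCommMonoid M] (n m : ℕ) (x y : M) :
    ∑ i : Fin (n + m), (if (i : ℕ) < n then x else y) = n • x + m • y := by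
  simp [Fin.sum_univ_add]

/-- Eigenvalues of `-PAP` for the adjacency matrix `A` of the complement of `K_{n,m}`:
`0` (trivial), `1` with multiplicity `n+m-2`, and `1 - 2mn/(m+n)` with multiplicity `1`. -/
theorem complement_bipartite_eigenvalues {n m : ℕ} (hn : 1 ≤ n) (hm : 1 ≤ m)
    (A : Matrix (Fin (n + m)) (Fin (n + m)) ℝ)
    (hA : ∀ i j, A i j = if i ≠ j ∧ ((i : ℕ) < n ↔ (j : ℕ) < n) then 1 else 0)
    (P : Matrix (Fin (n + m)) (Fin (n + m)) ℝ)
    (hP : P = 1 - ((n + m : ℕ) : ℝ)⁻¹ • Matrix.of (fun _ _ => (1 : ℝ))) :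
    (-(P * A * P)).charpoly =
      Polynomial.X * (Polynomial.X - Polynomial.C 1) ^ (n + m - 2) *
        (Polynomial.X - Polynomial.C (1 - 2 * (m : ℝ) * (n : ℝ) / ((m : ℝ) + (n : ℝ)))) := by
  set s : Fin (n + m) → ℝ := fun i => if (i : ℕ) < n then 1 else -1
  have hN : (Fintype.card (Fin (n + m)) : ℝ) ≠ 0 := by
    rw [Fintype.card_fin]; exact_mod_cast (by omega : n + m ≠ 0)
  have hP' : P = Matrix.centeringMatrix (Fin (n + m)) ℝ := by
    ext i j; simp [hP, Matrix.centeringMatrix]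
  have hA' :
      A = (1 / 2 : ℝ) • Matrix.vecMulVec 1 1 + (1 / 2 : ℝ) • Matrix.vecMulVec s s - 1 := by
    ext i j
    rw [hA]
    by_cases hij : i = j <;> by_cases hi : (i : ℕ) < n <;> by_cases hj : (j : ℕ) < n <;>
      simp [s, hij, hi, hj, Matrix.vecMulVec_apply] <;> norm_num
  have hsum : ∑ i, s i = n - m := by
    simp [s, Fin.sum_ite_lt_add, sub_eq_add_neg]
  have hss : s ⬝ᵥ s = n + m := by
    have hsq : ∀ i, s i * s i = 1 := fun i => by by_cases hi : (i : ℕ) < n <;> simp [s, hi]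
    simp [dotProduct, hsq]
  have heig :
      1 - 1 / 2 * (((n + m : ℕ) : ℝ) - ((n + m : ℕ) : ℝ)⁻¹ * ((n : ℝ) - m) ^ 2) =
      1 - 2 * (m : ℝ) * n / (m + n) := by
    have hmn : (m : ℝ) + n ≠ 0 := by positivity
    push_cast
    field_simp
    ring
  rw [hP', hA', Matrix.neg_centeringMatrix_mul_mul_centeringMatrix hN,
    Matrix.charpoly_one_sub_smul_vecMulVec_add_smul_vecMulVec _ _ _ _
      (Matrix.one_dotProduct_centeringMatrix_mulVec hN s) (by rw [Fintype.card_fin]; omega),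
    one_dotProduct_one, inv_mul_cancel₀ hN, Matrix.centeringMatrix_mulVec_dotProduct_self hN,
    hsum, hss, Fintype.card_fin, ← Nat.cast_add, heig, sub_self, map_zero, sub_zero, map_one]
  ring
end

section
/- For every integer n ≥ 3, the n×n circulant matrix M with entries M_{jk} = sin(π·|j−k|/n)/sin(π/n) is traceless, and the sum of the eigenvalues μₖ = 1/(cos(π/n) − cos(2πk/n)) for k = 1,...,n−1 equals 1/(1 − cos(π/n)); i.e., ∑_{k=1}^{n−1} 1/(cos(π/n) − cos(2πk/n)) = 1/(1 − cos(π/n)). -/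
/-!
With `t = π / (2n)` one has `π/n = 2t` and `2πk/n = 4kt`, and the product formula
`cos (2t) - cos (4kt) = 2 sin ((2k-1)t) sin ((2k+1)t)` turns each summand into a difference of
cotangents: `(cos (2t) - cos (4kt))⁻¹ = (cot ((2k-1)t) - cot ((2k+1)t)) / (2 sin (2t))`.
The sum telescopes to `(cot t - cot ((2n-1)t)) / (2 sin (2t))`, and since `(2n-1)t = π - t`
this is `cot t / sin (2t) = 1 / (2 sin² t) = (1 - cos (2t))⁻¹`.
-/

open Real Finset

lemma inv_cos_sub_sub_cos_add_eq_cot_sub_cot {u v : ℝ} (hu : sin u ≠ 0) (hv : sin v ≠ 0)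
    (hvu : sin (v - u) ≠ 0) :
    (cos (v - u) - cos (v + u))⁻¹ = (cot u - cot v) / (2 * sin (v - u)) := by
  have hcos : cos (v - u) - cos (v + u) = 2 * sin u * sin v := by
    rw [cos_sub, cos_add]; ring
  have hcot : cot u - cot v = sin (v - u) / (sin u * sin v) := by
    rw [cot_eq_cos_div_sin, cot_eq_cos_div_sin, div_sub_div _ _ hu hv, sin_sub]; ring
  rw [hcos, hcot]
  field_simp

lemma sum_Ico_inv_cos_sub_cos_eq_cot_sub_cot (t : ℝ) {n : ℕ} (hn : 1 ≤ n)
    (hodd : ∀ k ∈ Icc 1 n, sin ((2 * k - 1) * t) ≠ 0) (h2t : sin (2 * t) ≠ 0) :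
    ∑ k ∈ Ico 1 n, (cos (2 * t) - cos (4 * k * t))⁻¹
      = (cot t - cot ((2 * n - 1) * t)) / (2 * sin (2 * t)) := by
  have hterm : ∀ k ∈ Ico 1 n, (cos (2 * t) - cos (4 * k * t))⁻¹
      = (cot ((2 * k - 1) * t) - cot ((2 * (k + 1 : ℕ) - 1) * t)) / (2 * sin (2 * t)) := by
    intro k hk
    obtain ⟨hk1, hkn⟩ := mem_Ico.mp hk
    have hu := hodd k (mem_Icc.mpr ⟨hk1, hkn.le⟩)
    have hv := hodd (k + 1) (mem_Icc.mpr ⟨by omega, hkn⟩)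
    have hvu : ((2 * (k + 1 : ℕ) - 1) * t) - (2 * k - 1) * t = 2 * t := by push_cast; ring
    have hsum : ((2 * (k + 1 : ℕ) - 1) * t) + (2 * k - 1) * t = 4 * k * t := by push_cast; ring
    rw [← hvu, ← hsum, inv_cos_sub_sub_cos_add_eq_cot_sub_cot hu hv (hvu ▸ h2t)]
  have htel := sum_Ico_sub (fun k : ℕ => -cot ((2 * k - 1) * t)) hn
  norm_num only [neg_sub_neg, one_mul] at htel
  rw [sum_congr rfl hterm, ← sum_div, htel]

lemma cot_div_sin_two_mul {t : ℝ} (hs : sin t ≠ 0) (hc : cos t ≠ 0) :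
    cot t / sin (2 * t) = (1 - cos (2 * t))⁻¹ := by
  have h : 1 - cos (2 * t) = 2 * sin t ^ 2 := by rw [cos_two_mul, cos_sq']; ring
  rw [h, cot_eq_cos_div_sin, sin_two_mul]
  field_simp

lemma cot_pi_sub (x : ℝ) : cot (π - x) = -cot x := by
  rw [cot_eq_cos_div_sin, cos_pi_sub, sin_pi_sub, neg_div, cot_eq_cos_div_sin]

lemma sin_odd_mul_pi_div_pos {n k : ℕ} (hk : k ∈ Icc 1 n) :
    0 < sin ((2 * k - 1) * (π / (2 * n))) := by
  obtain ⟨hk1, hkn⟩ := mem_Icc.mp hk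
  have hk1' : (1 : ℝ) ≤ k := by exact_mod_cast hk1
  have hkn' : (k : ℝ) ≤ n := by exact_mod_cast hkn
  apply sin_pos_of_pos_of_lt_pi
  · exact mul_pos (by linarith) (div_pos pi_pos (by linarith))
  · rw [mul_div_assoc', div_lt_iff₀ (by linarith)]
    nlinarith [pi_pos]

/-- The uniform circle distance matrix is traceless, and the corresponding eigenvalue sum
identity `∑_{k=1}^{n-1} 1/(cos(π/n) - cos(2πk/n)) = 1/(1 - cos(π/n))` holds. -/
theorem circle_trace_identity {n : ℕ} (hn : 3 ≤ n)
    (M : Matrix (Fin n) (Fin n) ℝ)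
    (hM : ∀ j k : Fin n,
      M j k = Real.sin (Real.pi * |(j.val : ℝ) - (k.val : ℝ)| / n) / Real.sin (Real.pi / n)) :
    Matrix.trace M = 0 ∧
    ∑ k ∈ Finset.Ico 1 n,
        (Real.cos (Real.pi / n) - Real.cos (2 * Real.pi * k / n))⁻¹
      = (1 - Real.cos (Real.pi / n))⁻¹ := by
  refine ⟨by simp [Matrix.trace, hM], ?_⟩
  set t := π / (2 * n) with ht
  have hpi : π / n = 2 * t := by rw [ht]; field_simp
  have hend : (2 * n - 1) * t = π - t := by rw [ht]; field_simp
  have hsin : 0 < sin t := by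
    have h := sin_odd_mul_pi_div_pos (mem_Icc.mpr ⟨le_rfl, show 1 ≤ n by omega⟩)
    norm_num at h
    exact h
  have hcos : 0 < cos t := cos_pos_of_mem_Ioo ⟨by linarith [pi_pos, show 0 < t by positivity], by
    rw [ht, div_lt_div_iff₀ (by positivity) two_pos]
    nlinarith [pi_pos, (show (3 : ℝ) ≤ n by exact_mod_cast hn)]⟩
  have h2t : sin (2 * t) ≠ 0 := by rw [sin_two_mul]; positivity
  simp_rw [show ∀ k : ℕ, 2 * π * (k : ℝ) / n = 4 * k * t from fun k => by rw [ht]; field_simp; ring,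
    hpi]
  rw [sum_Ico_inv_cos_sub_cos_eq_cot_sub_cot t (by omega)
      (fun k hk => (sin_odd_mul_pi_div_pos hk).ne') h2t,
    hend, cot_pi_sub, sub_neg_eq_add, ← two_mul, mul_div_mul_left _ _ two_ne_zero,
    cot_div_sin_two_mul hsin.ne' hcos.ne']
end
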